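/- arXiv:2509.26613 — 5 statements merged into one kernel-verified Lean document; each statement's English description precedes it below -/
import Mathlib

section
/- Define p : ℕ → ℕ by p(1) = p(2) = 0 and the recurrences p(4ℓ-1) = p(ℓ) + ℓ - 1, p(4ℓ) = p(ℓ) + ℓ, p(4ℓ+1) = p(ℓ) + ℓ, p(4ℓ+2) = p(ℓ) + ℓ for ℓ ≥ 1. Then for all ℓ > 0, p(ℓ) ≤ ⌊(ℓ-1)/3⌋. -/
theorem p_le_floor_third (p : ℕ → ℕ)
    (hp1 : p 1 = 0) (hp2 : p 2 = 0)
    (hpa : ∀ ℓ : ℕ, 1 ≤ ℓ → p (4 * ℓ - 1) = p ℓ + ℓ - 1)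
    (hpb : ∀ ℓ : ℕ, 1 ≤ ℓ → p (4 * ℓ) = p ℓ + ℓ)
    (hpc : ∀ ℓ : ℕ, 1 ≤ ℓ → p (4 * ℓ + 1) = p ℓ + ℓ)
    (hpd : ∀ ℓ : ℕ, 1 ≤ ℓ → p (4 * ℓ + 2) = p ℓ + ℓ) :
    ∀ ℓ : ℕ, 0 < ℓ → p ℓ ≤ (ℓ - 1) / 3 := by
  intro n
  induction n using Nat.strong_induction_on with
  | _ n IH =>
    intro hn
    rcases Nat.lt_or_ge n 3 with h | h
    · interval_cases n <;> simp [hp1, hp2]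
    · set ℓ := (n + 1) / 4 with hℓ
      have h1 : 1 ≤ ℓ := by omega
      have hlt : ℓ < n := by omega
      have hIH := IH ℓ hlt (by omega)
      have hc : n = 4 * ℓ - 1 ∨ n = 4 * ℓ ∨ n = 4 * ℓ + 1 ∨ n = 4 * ℓ + 2 := by omega
      rcases hc with h|h|h|h
      · rw [h, hpa ℓ h1]; omega
      · rw [h, hpb ℓ h1]; omega
      · rw [h, hpc ℓ h1]; omega
      · rw [h, hpd ℓ h1]; omega
end

section
/- Define q : ℕ → ℕ by q(1) = q(2) = 1 and the recurrences q(4ℓ-1) = q(ℓ) + ℓ, q(4ℓ) = q(ℓ) + ℓ, q(4ℓ+1) = q(ℓ) + ℓ + 1, q(4ℓ+2) = q(ℓ) + ℓ + 1 for ℓ ≥ 1. Then for all ℓ > 0, q(ℓ) ≥ ⌊ℓ/3⌋ + 1. -/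
theorem q_ge_floor_third (q : ℕ → ℕ)
    (hq1 : q 1 = 1) (hq2 : q 2 = 1)
    (hqa : ∀ ℓ : ℕ, 1 ≤ ℓ → q (4 * ℓ - 1) = q ℓ + ℓ)
    (hqb : ∀ ℓ : ℕ, 1 ≤ ℓ → q (4 * ℓ) = q ℓ + ℓ)
    (hqc : ∀ ℓ : ℕ, 1 ≤ ℓ → q (4 * ℓ + 1) = q ℓ + ℓ + 1)
    (hqd : ∀ ℓ : ℕ, 1 ≤ ℓ → q (4 * ℓ + 2) = q ℓ + ℓ + 1) :
    ∀ ℓ : ℕ, 0 < ℓ → q ℓ ≥ ℓ / 3 + 1 := by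
  intro n
  induction n using Nat.strong_induction_on with
  | _ n ih =>
    intro hn
    rcases n with _ | _ | _ | m
    · omega
    · simp [hq1]
    · simp [hq2]
    · set l := (m + 4) / 4 with hl
      have hl1 : 1 ≤ l := by omega
      have hlm : l < m + 3 := by omega
      have hq := ih l hlm hl1
      have h4 : m + 4 = 4 * l ∨ m + 4 = 4 * l + 1 ∨ m + 4 = 4 * l + 2 ∨
          m + 4 = 4 * l + 3 := by omega
      rcases h4 with h | h | h | h
      · have he : m + 3 = 4 * l - 1 := by omega
        rw [he, hqa l hl1]; omega
      · have he : m + 3 = 4 * l := by omega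
        rw [he, hqb l hl1]; omega
      · have he : m + 3 = 4 * l + 1 := by omega
        rw [he, hqc l hl1]; omega
      · have he : m + 3 = 4 * l + 2 := by omega
        rw [he, hqd l hl1]; omega
end

section
/- With p and q defined by the recurrences p(1)=p(2)=0, p(4ℓ-1)=p(ℓ)+ℓ-1, p(4ℓ)=p(4ℓ+1)=p(4ℓ+2)=p(ℓ)+ℓ, and q(1)=q(2)=1, q(4ℓ-1)=q(4ℓ)=q(ℓ)+ℓ, q(4ℓ+1)=q(4ℓ+2)=q(ℓ)+ℓ+1, for every ℓ > 0 the interval [p(ℓ), q(ℓ)] contains an integer b such that the triple of nonnegative integers (a, b, c) with a + b + c = ℓ and |a - c| ≤ 1 satisfies |a - b| ≤ 1 or |b - c| ≤ 1. -/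
theorem exists_middle_near_equal (p q : ℕ → ℕ)
    (hp1 : p 1 = 0) (hp2 : p 2 = 0)
    (hpa : ∀ ℓ : ℕ, 1 ≤ ℓ → p (4 * ℓ - 1) = p ℓ + ℓ - 1)
    (hpb : ∀ ℓ : ℕ, 1 ≤ ℓ → p (4 * ℓ) = p ℓ + ℓ)
    (hpc : ∀ ℓ : ℕ, 1 ≤ ℓ → p (4 * ℓ + 1) = p ℓ + ℓ)
    (hpd : ∀ ℓ : ℕ, 1 ≤ ℓ → p (4 * ℓ + 2) = p ℓ + ℓ)
    (hq1 : q 1 = 1) (hq2 : q 2 = 1)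
    (hqa : ∀ ℓ : ℕ, 1 ≤ ℓ → q (4 * ℓ - 1) = q ℓ + ℓ)
    (hqb : ∀ ℓ : ℕ, 1 ≤ ℓ → q (4 * ℓ) = q ℓ + ℓ)
    (hqc : ∀ ℓ : ℕ, 1 ≤ ℓ → q (4 * ℓ + 1) = q ℓ + ℓ + 1)
    (hqd : ∀ ℓ : ℕ, 1 ≤ ℓ → q (4 * ℓ + 2) = q ℓ + ℓ + 1) :
    ∀ ℓ : ℕ, 0 < ℓ → ∃ b a c : ℕ,
      p ℓ ≤ b ∧ b ≤ q ℓ ∧ a + b + c = ℓ ∧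
      |(a : ℤ) - (c : ℤ)| ≤ 1 ∧
      (|(a : ℤ) - (b : ℤ)| ≤ 1 ∨ |(b : ℤ) - (c : ℤ)| ≤ 1) := by
  have key : ∀ m : ℕ, 1 ≤ m → p m ≤ m / 3 ∧ m / 3 ≤ q m := by
    intro m
    induction m using Nat.strong_induction_on with
    | _ m ih =>
      intro hm
      match m, hm with
      | 1, _ => simp [hp1, hq1]
      | 2, _ => simp [hp2, hq2]
      | (n+3), _ =>
        set m := n + 3 with hmdef
        rcases Nat.lt_or_ge (m % 4) 3 with h4 | h4
        · -- m = 4ℓ, 4ℓ+1, or 4ℓ+2 with ℓ = m / 4 ≥ 1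
          set ℓ := m / 4 with hl
          have hℓ1 : 1 ≤ ℓ := by omega
          have hℓm : ℓ < m := by omega
          have hIH := ih ℓ hℓm hℓ1
          interval_cases h : (m % 4)
          · have hm4 : m = 4 * ℓ := by omega
            rw [hm4, hpb ℓ hℓ1, hqb ℓ hℓ1]; omega
          · have hm4 : m = 4 * ℓ + 1 := by omega
            rw [hm4, hpc ℓ hℓ1, hqc ℓ hℓ1]; omega
          · have hm4 : m = 4 * ℓ + 2 := by omega
            rw [hm4, hpd ℓ hℓ1, hqd ℓ hℓ1]; omega
        · -- m = 4ℓ - 1 with ℓ = (m+1)/4 ≥ 1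
          set ℓ := (m + 1) / 4 with hl
          have hℓ1 : 1 ≤ ℓ := by omega
          have hℓm : ℓ < m := by omega
          have hIH := ih ℓ hℓm hℓ1
          have hm4 : m = 4 * ℓ - 1 := by omega
          rw [hm4, hpa ℓ hℓ1, hqa ℓ hℓ1]; omega
  intro ℓ hℓ
  obtain ⟨h1, h2⟩ := key ℓ hℓ
  refine ⟨ℓ / 3, ℓ - ℓ / 3 - (ℓ - ℓ / 3) / 2, (ℓ - ℓ / 3) / 2, h1, h2, by omega, ?_, Or.inr ?_⟩
  · rw [abs_le]
    constructor <;> push_cast [Nat.sub_sub] <;> omega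
  · rw [abs_le]
    constructor <;> push_cast [Nat.sub_sub] <;> omega
end

section
/- Every factor u of the Thue–Morse word of odd length 2m+1 has Parikh vector (m+1, m) or (m, m+1), and every factor of even length 2m+2 has Parikh vector (m+2, m), (m+1, m+1), or (m, m+2). Consequently, the number of sorted Parikh vectors (Parikh vectors up to permutation of coordinates) of length-ℓ factors of the Thue–Morse word is 1 if ℓ is odd and 2 if ℓ is even. -/
/-!
Since `tm (2n) = tm n` and `tm (2n+1) = 1 - tm n`, every aligned pair of letters of `tm` is `01`
or `10`. So the number of 1s among the first `n` letters is `n/2` for even `n` and `n/2 ± 1/2`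
for odd `n`. The number of 1s in the factor of length `ℓ` at position `j` is the difference of
the prefix counts at `j + ℓ` and `j`, hence within 1 of `ℓ/2`, and within `1/2` when `ℓ` is
odd, because then one of `j`, `j + ℓ` is even. Every sorted vector this allows occurs: the
balanced one at `j = 0`, and `(m+2, m)` at an odd position `2a+1` with `tm a ≠ tm (a+m+1)`,
which exists because `tm` is not periodic.
-/

/-- `u` is a factor of the infinite word `w`. -/
def IsFactorI {α : Type*} (u : List α) (w : ℕ → α) : Prop :=
  ∃ j : ℕ, u = (List.range u.length).map (fun i => w (j + i))

/-- The Thue–Morse morphism `0 ↦ 01`, `1 ↦ 10`. -/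
def tmMu : ℕ → List ℕ
  | 0 => [0, 1]
  | _ => [1, 0]

/-- Iterates of the Thue–Morse morphism on the letter `0`. -/
def tmIter : ℕ → List ℕ
  | 0 => [0]
  | k + 1 => (tmIter k).flatMap tmMu

/-- The Thue–Morse word, the fixed point of `0 ↦ 01`, `1 ↦ 10` starting with `0`. -/
def tm (n : ℕ) : ℕ := (tmIter (n + 1)).getD n 0

theorem List.getD_flatMap_of_length_eq {α β : Type*} {f : α → List β} {c : ℕ}
    (hf : ∀ a, (f a).length = c) (l : List α) {i r : ℕ} (hi : i < l.length) (hr : r < c)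
    (d : β) : (l.flatMap f).getD (c * i + r) d = (f l[i]).getD r d := by
  induction l generalizing i with
  | nil => simp at hi
  | cons a t ih =>
    rw [List.flatMap_cons]
    cases i with
    | zero => simpa using List.getD_append _ _ d _ (by rw [hf]; exact hr)
    | succ i =>
      rw [List.getD_append_right _ _ _ _ (by rw [hf]; nlinarith), hf,
        show c * (i + 1) + r - c = c * i + r by rw [mul_add_one]; omega]
      exact ih (by simpa using hi)

theorem tmMu_length (x : ℕ) : (tmMu x).length = 2 := by
  cases x <;> rfl

theorem tmMu_getD_le_one (x r : ℕ) : (tmMu x).getD r 0 ≤ 1 := by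
  rcases x with _ | _ <;> rcases r with _ | _ | _ <;> simp [tmMu]

theorem tmIter_length (k : ℕ) : (tmIter k).length = 2 ^ k := by
  induction k with
  | zero => rfl
  | succ k ih => simp [tmIter, List.length_flatMap, tmMu_length, ih, pow_succ, mul_comm]

theorem tmIter_prefix_succ (k : ℕ) : tmIter k <+: tmIter (k + 1) := by
  induction k with
  | zero => exact ⟨[1], rfl⟩
  | succ k ih => exact ih.flatMap tmMu

theorem tmIter_prefix_of_le {k m : ℕ} (h : k ≤ m) : tmIter k <+: tmIter m := by
  induction m, h using Nat.le_induction with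
  | base => exact List.prefix_refl _
  | succ m _ ih => exact ih.trans (tmIter_prefix_succ m)

theorem tmIter_getD_eq_of_le {n k m : ℕ} (h : k ≤ m) (hn : n < 2 ^ k) :
    (tmIter k).getD n 0 = (tmIter m).getD n 0 := by
  have hk : n < (tmIter k).length := by rwa [tmIter_length]
  rw [List.getD_eq_getElem _ _ hk,
    List.getD_eq_getElem _ _ ((tmIter_prefix_of_le h).length_le.trans_lt' hk)]
  exact (tmIter_prefix_of_le h).getElem hk

theorem tm_eq_getD_tmIter {n k : ℕ} (hn : n < 2 ^ k) : tm n = (tmIter k).getD n 0 := by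
  have hn' : n < 2 ^ (n + 1) :=
    Nat.lt_two_pow_self.trans (Nat.pow_lt_pow_right one_lt_two n.lt_succ_self)
  rw [tm, tmIter_getD_eq_of_le (le_max_left _ k) hn',
    tmIter_getD_eq_of_le (le_max_right (n + 1) k) hn]

theorem tm_two_mul_add {n r : ℕ} (hr : r < 2) : tm (2 * n + r) = (tmMu (tm n)).getD r 0 := by
  have hn : n < 2 ^ n := Nat.lt_two_pow_self
  have hlen : n < (tmIter n).length := by rwa [tmIter_length]
  rw [tm_eq_getD_tmIter (k := n + 1) (by rw [pow_succ]; omega), tmIter,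
    List.getD_flatMap_of_length_eq tmMu_length _ hlen hr, tm_eq_getD_tmIter hn,
    List.getD_eq_getElem _ _ hlen]

theorem tm_le_one (n : ℕ) : tm n ≤ 1 := by
  rw [← Nat.div_add_mod n 2, tm_two_mul_add (Nat.mod_lt n two_pos)]
  exact tmMu_getD_le_one _ _

theorem tm_two_mul (n : ℕ) : tm (2 * n) = tm n := by
  have := tm_le_one n
  rw [← add_zero (2 * n), tm_two_mul_add two_pos]
  interval_cases tm n <;> rfl

theorem tm_two_mul_add_one (n : ℕ) : tm (2 * n + 1) = 1 - tm n := by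
  have := tm_le_one n
  rw [tm_two_mul_add one_lt_two]
  interval_cases tm n <;> rfl

theorem exists_tm_add_ne {d : ℕ} (hd : 0 < d) : ∃ a, tm (a + d) ≠ tm a := by
  induction d using Nat.strong_induction_on with
  | _ d ih =>
    obtain ⟨e, rfl | rfl⟩ := Nat.even_or_odd' d
    · obtain ⟨a, ha⟩ := ih e (by omega) (by omega)
      exact ⟨2 * a, by rwa [← mul_add, tm_two_mul, tm_two_mul]⟩
    · refine ⟨2 * e, ?_⟩
      rw [show 2 * e + (2 * e + 1) = 2 * (2 * e) + 1 by ring, tm_two_mul_add_one]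
      have := tm_le_one (2 * e)
      omega

theorem List.count_zero_add_count_one {l : List ℕ} (h : ∀ x ∈ l, x ≤ 1) :
    l.count 0 + l.count 1 = l.length := by
  induction l with
  | nil => rfl
  | cons a l ih =>
    have ha := h a List.mem_cons_self
    have hl := ih fun x hx => h x (List.mem_cons_of_mem a hx)
    interval_cases a <;> simp <;> omega

def tmFactor (j ℓ : ℕ) : List ℕ := (List.range ℓ).map fun i => tm (j + i)

@[simp]
theorem length_tmFactor (j ℓ : ℕ) : (tmFactor j ℓ).length = ℓ := by
  simp [tmFactor]

theorem isFactorI_tmFactor (j ℓ : ℕ) : IsFactorI (tmFactor j ℓ) tm :=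
  ⟨j, by rw [length_tmFactor]; rfl⟩

theorem IsFactorI.eq_tmFactor {u : List ℕ} (hu : IsFactorI u tm) :
    ∃ j, u = tmFactor j u.length :=
  hu

theorem tmFactor_add (j a b : ℕ) : tmFactor j (a + b) = tmFactor j a ++ tmFactor (j + a) b := by
  simp [tmFactor, List.range_add, add_assoc]

theorem count_zero_add_count_one_tmFactor (j ℓ : ℕ) :
    (tmFactor j ℓ).count 0 + (tmFactor j ℓ).count 1 = ℓ := by
  refine (List.count_zero_add_count_one ?_).trans (length_tmFactor j ℓ)
  simp only [tmFactor, List.mem_map]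
  rintro _ ⟨i, -, rfl⟩
  exact tm_le_one _

def tmOnes (n : ℕ) : ℕ := (tmFactor 0 n).count 1

theorem tmOnes_two_mul (k : ℕ) : tmOnes (2 * k) = k := by
  induction k with
  | zero => rfl
  | succ k ih =>
    have hk := tm_le_one k
    have pair : tmFactor (2 * k) 2 = [tm k, 1 - tm k] := by
      simp [tmFactor, List.range_succ, tm_two_mul, tm_two_mul_add_one]
    rw [tmOnes, mul_add_one, tmFactor_add, List.count_append, ← tmOnes, ih, zero_add, pair]
    interval_cases tm k <;> rfl

theorem tmOnes_two_mul_add_one (k : ℕ) : tmOnes (2 * k + 1) = k + tm k := by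
  have hk := tm_le_one k
  have single : tmFactor (2 * k) 1 = [tm k] := by simp [tmFactor, tm_two_mul]
  rw [tmOnes, tmFactor_add, List.count_append, ← tmOnes, tmOnes_two_mul, zero_add, single]
  interval_cases tm k <;> rfl

theorem count_one_tmFactor_add_tmOnes (j ℓ : ℕ) :
    (tmFactor j ℓ).count 1 + tmOnes j = tmOnes (j + ℓ) := by
  rw [tmOnes, tmOnes, tmFactor_add, List.count_append, zero_add, add_comm]

theorem tmOnes_balanced (n : ℕ) : n ≤ 2 * tmOnes n + 1 ∧ 2 * tmOnes n ≤ n + 1 := by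
  obtain ⟨k, rfl | rfl⟩ := Nat.even_or_odd' n
  · rw [tmOnes_two_mul]; omega
  · rw [tmOnes_two_mul_add_one]; have := tm_le_one k; omega

namespace IsFactorI

variable {u : List ℕ}

theorem tm_count_zero_add_count_one (hu : IsFactorI u tm) :
    u.count 0 + u.count 1 = u.length := by
  obtain ⟨j, hj⟩ := hu.eq_tmFactor
  have := count_zero_add_count_one_tmFactor j u.length
  rwa [← hj] at this

theorem tm_exists_count_one_add_tmOnes (hu : IsFactorI u tm) :
    ∃ j, u.count 1 + tmOnes j = tmOnes (j + u.length) := by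
  obtain ⟨j, hj⟩ := hu.eq_tmFactor
  have hsplit := count_one_tmFactor_add_tmOnes j u.length
  rw [← hj] at hsplit
  exact ⟨j, hsplit⟩

theorem tm_count_one_balanced (hu : IsFactorI u tm) :
    u.length ≤ 2 * u.count 1 + 2 ∧ 2 * u.count 1 ≤ u.length + 2 := by
  obtain ⟨j, hsplit⟩ := hu.tm_exists_count_one_add_tmOnes
  have := tmOnes_balanced j
  have := tmOnes_balanced (j + u.length)
  omega

theorem tm_count_one_balanced_of_odd (hu : IsFactorI u tm) (hodd : Odd u.length) :
    u.length ≤ 2 * u.count 1 + 1 ∧ 2 * u.count 1 ≤ u.length + 1 := by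
  obtain ⟨j, hsplit⟩ := hu.tm_exists_count_one_add_tmOnes
  have := tmOnes_balanced j
  have := tmOnes_balanced (j + u.length)
  obtain ⟨a, rfl | rfl⟩ := Nat.even_or_odd' j
  · rw [tmOnes_two_mul] at hsplit; omega
  · obtain ⟨b, hb⟩ := hodd
    rw [show 2 * a + 1 + u.length = 2 * (a + b + 1) by omega, tmOnes_two_mul] at hsplit
    omega

theorem tm_parikh_of_length_odd {m : ℕ} (hu : IsFactorI u tm) (hl : u.length = 2 * m + 1) :
    (u.count 0, u.count 1) = (m + 1, m) ∨ (u.count 0, u.count 1) = (m, m + 1) := by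
  have := hu.tm_count_zero_add_count_one
  have := hu.tm_count_one_balanced_of_odd (by rw [hl]; exact odd_two_mul_add_one m)
  simp only [Prod.mk.injEq]
  omega

theorem tm_parikh_of_length_even {m : ℕ} (hu : IsFactorI u tm) (hl : u.length = 2 * m + 2) :
    (u.count 0, u.count 1) = (m + 2, m) ∨ (u.count 0, u.count 1) = (m + 1, m + 1) ∨
      (u.count 0, u.count 1) = (m, m + 2) := by
  have := hu.tm_count_zero_add_count_one
  have := hu.tm_count_one_balanced
  simp only [Prod.mk.injEq]
  omega

end IsFactorI

def sortedParikh (u : List ℕ) : ℕ × ℕ :=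
  (max (u.count 0) (u.count 1), min (u.count 0) (u.count 1))

def sortedParikhVectors (w : ℕ → ℕ) (ℓ : ℕ) : Set (ℕ × ℕ) :=
  {p | ∃ u : List ℕ, IsFactorI u w ∧ u.length = ℓ ∧ p = sortedParikh u}

theorem sortedParikhVectors_tm_of_odd (m : ℕ) :
    sortedParikhVectors tm (2 * m + 1) = {(m + 1, m)} := by
  have sorted {u : List ℕ} (hu : IsFactorI u tm) (hl : u.length = 2 * m + 1) :
      sortedParikh u = (m + 1, m) := by
    have := hu.tm_parikh_of_length_odd hl
    simp only [sortedParikh, Prod.mk.injEq] at this ⊢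
    omega
  refine Set.eq_singleton_iff_unique_mem.2 ⟨?_, ?_⟩
  · exact ⟨_, isFactorI_tmFactor 0 _, length_tmFactor 0 _,
      (sorted (isFactorI_tmFactor 0 _) (length_tmFactor 0 _)).symm⟩
  · rintro _ ⟨u, hu, hl, rfl⟩
    exact sorted hu hl

theorem exists_sortedParikh_tmFactor_eq (m : ℕ) :
    ∃ j, sortedParikh (tmFactor j (2 * m + 2)) = (m + 2, m) := by
  obtain ⟨a, ha⟩ := exists_tm_add_ne (d := m + 1) m.succ_pos
  refine ⟨2 * a + 1, ?_⟩
  have hsplit := count_one_tmFactor_add_tmOnes (2 * a + 1) (2 * m + 2)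
  rw [show 2 * a + 1 + (2 * m + 2) = 2 * (a + (m + 1)) + 1 by ring, tmOnes_two_mul_add_one,
    tmOnes_two_mul_add_one] at hsplit
  have := count_zero_add_count_one_tmFactor (2 * a + 1) (2 * m + 2)
  have := tm_le_one a
  have := tm_le_one (a + (m + 1))
  simp only [sortedParikh, Prod.mk.injEq]
  omega

theorem sortedParikhVectors_tm_of_even (m : ℕ) :
    sortedParikhVectors tm (2 * m + 2) = {(m + 2, m), (m + 1, m + 1)} := by
  ext p
  simp only [Set.mem_insert_iff, Set.mem_singleton_iff]
  constructor
  · rintro ⟨u, hu, hl, rfl⟩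
    have := hu.tm_parikh_of_length_even hl
    simp only [sortedParikh, Prod.mk.injEq] at this ⊢
    omega
  · rintro (rfl | rfl)
    · obtain ⟨j, hj⟩ := exists_sortedParikh_tmFactor_eq m
      exact ⟨_, isFactorI_tmFactor j _, length_tmFactor j _, hj.symm⟩
    · refine ⟨_, isFactorI_tmFactor 0 _, length_tmFactor 0 _, ?_⟩
      have hones : (tmFactor 0 (2 * m + 2)).count 1 = m + 1 := tmOnes_two_mul (m + 1)
      have := count_zero_add_count_one_tmFactor 0 (2 * m + 2)
      simp only [sortedParikh, Prod.mk.injEq]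
      omega

theorem ncard_sortedParikhVectors_tm {ℓ : ℕ} (hℓ : 0 < ℓ) :
    (sortedParikhVectors tm ℓ).ncard = if Odd ℓ then 1 else 2 := by
  obtain ⟨m, rfl | rfl⟩ := Nat.even_or_odd' ℓ
  · obtain ⟨m, rfl⟩ := Nat.exists_eq_add_one.2 (by omega : 0 < m)
    rw [if_neg (by simp [Nat.odd_iff]), mul_add_one, sortedParikhVectors_tm_of_even,
      Set.ncard_pair (by simp)]
  · rw [if_pos (odd_two_mul_add_one m), sortedParikhVectors_tm_of_odd, Set.ncard_singleton]

theorem tm_parikh_and_sorted_abelian_complexity :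
    -- odd-length factors
    (∀ m : ℕ, ∀ u : List ℕ, IsFactorI u tm → u.length = 2 * m + 1 →
      (u.count 0, u.count 1) = (m + 1, m) ∨ (u.count 0, u.count 1) = (m, m + 1)) ∧
    -- even-length factors
    (∀ m : ℕ, ∀ u : List ℕ, IsFactorI u tm → u.length = 2 * m + 2 →
      (u.count 0, u.count 1) = (m + 2, m) ∨ (u.count 0, u.count 1) = (m + 1, m + 1) ∨
        (u.count 0, u.count 1) = (m, m + 2)) ∧
    -- number of sorted Parikh vectors of length-ℓ factors
    (∀ ℓ : ℕ, 0 < ℓ →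
      Nat.card {p : ℕ × ℕ // ∃ u : List ℕ, IsFactorI u tm ∧ u.length = ℓ ∧
        p = (max (u.count 0) (u.count 1), min (u.count 0) (u.count 1))} =
      if Odd ℓ then 1 else 2) :=
  ⟨fun _ _ hu hl => hu.tm_parikh_of_length_odd hl,
    fun _ _ hu hl => hu.tm_parikh_of_length_even hl,
    fun _ hℓ => (Nat.card_coe_set_eq (sortedParikhVectors tm _)).trans
      (ncard_sortedParikhVectors_tm hℓ)⟩
end

section
/- Define p, q : ℕ → ℕ by p(1)=p(2)=0, q(1)=q(2)=1 and p(4ℓ-1)=p(ℓ)+ℓ-1, p(4ℓ)=p(4ℓ+1)=p(4ℓ+2)=p(ℓ)+ℓ, q(4ℓ-1)=q(4ℓ)=q(ℓ)+ℓ, q(4ℓ+1)=q(4ℓ+2)=q(ℓ)+ℓ+1. Then for all ℓ > 0, p(ℓ) ≤ q(ℓ), and moreover q(ℓ) - p(ℓ) ≥ 1. -/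
theorem p_lt_q (p q : ℕ → ℕ)
    (hp1 : p 1 = 0) (hp2 : p 2 = 0)
    (hpa : ∀ ℓ : ℕ, 1 ≤ ℓ → p (4 * ℓ - 1) = p ℓ + ℓ - 1)
    (hpb : ∀ ℓ : ℕ, 1 ≤ ℓ → p (4 * ℓ) = p ℓ + ℓ)
    (hpc : ∀ ℓ : ℕ, 1 ≤ ℓ → p (4 * ℓ + 1) = p ℓ + ℓ)
    (hpd : ∀ ℓ : ℕ, 1 ≤ ℓ → p (4 * ℓ + 2) = p ℓ + ℓ)
    (hq1 : q 1 = 1) (hq2 : q 2 = 1)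
    (hqa : ∀ ℓ : ℕ, 1 ≤ ℓ → q (4 * ℓ - 1) = q ℓ + ℓ)
    (hqb : ∀ ℓ : ℕ, 1 ≤ ℓ → q (4 * ℓ) = q ℓ + ℓ)
    (hqc : ∀ ℓ : ℕ, 1 ≤ ℓ → q (4 * ℓ + 1) = q ℓ + ℓ + 1)
    (hqd : ∀ ℓ : ℕ, 1 ≤ ℓ → q (4 * ℓ + 2) = q ℓ + ℓ + 1) :
    ∀ ℓ : ℕ, 0 < ℓ → p ℓ ≤ q ℓ ∧ 1 ≤ q ℓ - p ℓ := by
  have key : ∀ n : ℕ, 1 ≤ n → p n + 1 ≤ q n := by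
    intro n
    induction n using Nat.strong_induction_on with
    | _ n ih =>
      intro hn
      obtain ⟨ℓ, r, hr, rfl⟩ : ∃ ℓ r, r < 4 ∧ n = 4 * ℓ + r :=
        ⟨n / 4, n % 4, Nat.mod_lt _ (by norm_num), (Nat.div_add_mod n 4).symm⟩
      interval_cases r
      · have hℓ : 1 ≤ ℓ := by omega
        have h := ih ℓ (by omega) hℓ
        show p (4 * ℓ) + 1 ≤ q (4 * ℓ); rw [hpb ℓ hℓ, hqb ℓ hℓ]; omega
      · rcases Nat.eq_zero_or_pos ℓ with h0 | hℓ
        · subst h0; simp [hp1, hq1]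
        · have h := ih ℓ (by omega) hℓ
          rw [hpc ℓ hℓ, hqc ℓ hℓ]; omega
      · rcases Nat.eq_zero_or_pos ℓ with h0 | hℓ
        · subst h0; simp [hp2, hq2]
        · have h := ih ℓ (by omega) hℓ
          rw [hpd ℓ hℓ, hqd ℓ hℓ]; omega
      · have hℓ : 1 ≤ ℓ + 1 := by omega
        have h := ih (ℓ + 1) (by omega) hℓ
        have e : 4 * ℓ + 3 = 4 * (ℓ + 1) - 1 := by omega
        rw [e, hpa (ℓ + 1) hℓ, hqa (ℓ + 1) hℓ]; omega
  intro ℓ hℓ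
  have := key ℓ hℓ
  omega
end
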